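/- For any n, m ∈ ℕ and any k, l ∈ {1, ..., min(n,m)}, there exists a unitary U ∈ U(ℂ^n ⊗ ℂ^m) with operator Schmidt rank Ω(U) = kl. -/

import Mathlib

open Matrix Kronecker

/-- The realignment (reshuffling) of a bipartite operator. -/
def realign {n m : ℕ} (X : Matrix (Fin n × Fin m) (Fin n × Fin m) ℂ) :
    Matrix (Fin n × Fin n) (Fin m × Fin m) ℂ :=
  Matrix.of fun p q => X (p.1, q.1) (p.2, q.2)

/-- The operator Schmidt rank of a bipartite operator, i.e. the rank
of its realignment. -/
noncomputable def osr {n m : ℕ} (X : Matrix (Fin n × Fin m) (Fin n × Fin m) ℂ) : ℕ :=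
  (realign X).rank

/-!
Take `U` to be the permutation matrix of `(i, j) ↦ (i - f (j - g i), j - g i)`, a product of two
controlled shifts, for some `f : Fin m → Fin n` and `g : Fin n → Fin m`. Its realignment is the
`0/1` matrix with entry `1` at `((i, i'), (j, j'))` exactly when `(i - i', g i) = (f j', j - j')`.
A matrix of the form `[α p = β q]` factors through the common values of `α` and `β`, and contains
an identity block indexed by them, so its rank is their number; here the common values are
`range f × range g`. Choosing `f` and `g` with `k` and `l` values gives `Ω(U) = k l`.
-/

open Finset

theorem Matrix.rank_of_ite_eq {ι ι' κ R : Type*} [Fintype ι] [Fintype ι'] [DecidableEq κ]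
    [CommRing R] [StrongRankCondition R] (α : ι → κ) (β : ι' → κ) :
    (of fun p q => if α p = β q then (1 : R) else 0).rank
      = #(univ.image α ∩ univ.image β) := by
  set S := univ.image α ∩ univ.image β
  apply le_antisymm
  · have hfactor : (of fun p q => if α p = β q then (1 : R) else 0)
        = (of fun p (z : S) => if α p = z then (1 : R) else 0)
          * of fun (z : S) q => if (z : κ) = β q then (1 : R) else 0 := by
      ext p q
      simp only [of_apply, mul_apply, mul_ite, mul_one, mul_zero]
      split_ifs with h
      · have hq : β q ∈ S := mem_inter.mpr
          ⟨h ▸ mem_image_of_mem α (mem_univ p), mem_image_of_mem β (mem_univ q)⟩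
        rw [Fintype.sum_eq_single ⟨β q, hq⟩ fun z hz => if_neg (mt Subtype.ext hz)]
        simp [h]
      · exact (Fintype.sum_eq_zero _ fun z => ite_eq_right_iff.mpr
          fun hz => if_neg fun hp => h (hp.trans hz)).symm
    rw [hfactor]
    exact (rank_mul_le_left _ _).trans ((rank_le_card_width _).trans (by simp))
  · have hα : ∀ z : S, ∃ p, α p = z := fun z => by
      obtain ⟨p, -, hp⟩ := mem_image.mp (mem_inter.mp z.2).1
      exact ⟨p, hp⟩
    have hβ : ∀ z : S, ∃ q, β q = z := fun z => by
      obtain ⟨q, -, hq⟩ := mem_image.mp (mem_inter.mp z.2).2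
      exact ⟨q, hq⟩
    choose a ha using hα
    choose b hb using hβ
    calc #S = (1 : Matrix S S R).rank := by rw [rank_one, Fintype.card_coe]
      _ = ((of fun p q => if α p = β q then (1 : R) else 0).submatrix a b).rank := by
        congr 1
        ext z z'
        rw [one_apply, submatrix_apply, of_apply, ha, hb]
        exact if_congr Subtype.ext_iff rfl rfl
      _ ≤ _ := rank_submatrix_le _ _ _

theorem Matrix.permMatrix_mem_unitaryGroup {ι : Type*} [Fintype ι] [DecidableEq ι]
    (σ : Equiv.Perm ι) : σ.permMatrix ℂ ∈ unitaryGroup ι ℂ := by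
  rw [mem_unitaryGroup_iff', star_eq_conjTranspose, conjTranspose_permMatrix, ← permMatrix_mul,
    mul_inv_cancel, permMatrix_one]

theorem Fin.exists_card_image_eq {m n k : ℕ} (hk : 1 ≤ k) (hkm : k ≤ m) (hkn : k ≤ n) :
    ∃ f : Fin m → Fin n, #(univ.image f) = k := by
  obtain ⟨k, rfl⟩ : ∃ k', k = k' + 1 := ⟨k - 1, by omega⟩
  have hclamp : Function.Surjective fun j : Fin m => Fin.clamp j k := fun y =>
    ⟨⟨y, by omega⟩, Fin.ext (by simp [Fin.clamp]; omega)⟩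
  refine ⟨Fin.castLE hkn ∘ fun j => Fin.clamp j k, ?_⟩
  rw [← image_image, image_univ_of_surjective hclamp,
    card_image_of_injective _ (Fin.castLE_injective hkn), card_univ, Fintype.card_fin]

section ShearPerm

variable {n m : ℕ} [NeZero n] [NeZero m]

def shearPerm (f : Fin m → Fin n) (g : Fin n → Fin m) : Equiv.Perm (Fin n × Fin m) where
  toFun x := (x.1 - f (x.2 - g x.1), x.2 - g x.1)
  invFun y := (y.1 + f y.2, y.2 + g (y.1 + f y.2))
  left_inv x := by simp
  right_inv y := by simp

theorem realign_permMatrix_shearPerm (f : Fin m → Fin n) (g : Fin n → Fin m) :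
    realign ((shearPerm f g).permMatrix ℂ)
      = of fun p q => if (p.1 - p.2, g p.1) = (f q.2, q.1 - q.2) then 1 else 0 := by
  ext p q
  simp only [realign, shearPerm, of_apply, PEquiv.toMatrix_apply, Equiv.toPEquiv_apply,
    Option.mem_def, Option.some.injEq, Equiv.coe_fn_mk, Prod.mk.injEq]
  refine if_congr ⟨?_, ?_⟩ rfl rfl
  · rintro ⟨h₁, h₂⟩
    rw [← h₁, ← h₂]
    simp
  · rintro ⟨h₁, h₂⟩
    have h : q.1 - g p.1 = q.2 := by rw [h₂, sub_sub_cancel]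
    exact ⟨by rw [h, ← h₁, sub_sub_cancel], h⟩

theorem osr_permMatrix_shearPerm (f : Fin m → Fin n) (g : Fin n → Fin m) :
    osr ((shearPerm f g).permMatrix ℂ) = #(univ.image f) * #(univ.image g) := by
  have himage : univ.image (fun p : Fin n × Fin n => (p.1 - p.2, g p.1))
      ∩ univ.image (fun q : Fin m × Fin m => (f q.2, q.1 - q.2))
      = univ.image f ×ˢ univ.image g := by
    ext ⟨x, y⟩
    simp only [mem_inter, mem_image, mem_univ, true_and, mem_product, Prod.exists, Prod.mk.injEq]
    constructor
    · rintro ⟨⟨a, -, -, ha⟩, -, c, hc, -⟩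
      exact ⟨⟨c, hc⟩, ⟨a, ha⟩⟩
    · rintro ⟨⟨c, rfl⟩, ⟨a, rfl⟩⟩
      exact ⟨⟨a, a - f c, sub_sub_cancel _ _, rfl⟩, g a + c, c, rfl, add_sub_cancel_right _ _⟩
  rw [osr, realign_permMatrix_shearPerm, rank_of_ite_eq, himage, card_product]

end ShearPerm

/-- For any `k, l ∈ {1, ..., min(n,m)}` there is a unitary on `ℂ^n ⊗ ℂ^m`
with operator Schmidt rank `k·l`. -/
theorem stmt12 (n m k l : ℕ) (hk : 1 ≤ k) (hk' : k ≤ min n m)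
    (hl : 1 ≤ l) (hl' : l ≤ min n m) :
    ∃ U ∈ Matrix.unitaryGroup (Fin n × Fin m) ℂ, osr U = k * l := by
  have : NeZero n := ⟨by omega⟩
  have : NeZero m := ⟨by omega⟩
  obtain ⟨f, hf⟩ := Fin.exists_card_image_eq hk (hk'.trans (min_le_right n m))
    (hk'.trans (min_le_left n m))
  obtain ⟨g, hg⟩ := Fin.exists_card_image_eq hl (hl'.trans (min_le_left n m))
    (hl'.trans (min_le_right n m))
  exact ⟨_, permMatrix_mem_unitaryGroup (shearPerm f g), by rw [osr_permMatrix_shearPerm, hf, hg]⟩
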